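/- arXiv:1405.7547 — 4 statements merged into one kernel-verified Lean document; each statement's English description precedes it below -/
import Mathlib

section
/- Let G and G' be Beauville groups with Beauville structures {{x₁,y₁},{x₂,y₂}} and {{x₁',y₁'},{x₂',y₂'}} respectively. Suppose gcd(o(xᵢ), o(xᵢ')) = gcd(o(yᵢ), o(yᵢ')) = 1 for i = 1, 2. Then {{(x₁,x₁'),(y₁,y₁')},{(x₂,x₂'),(y₂,y₂')}} is a Beauville structure for G × G'. -/
/-- The set Σ(x,y): all conjugates of all powers of x, y and xy. -/
def BSigma {G : Type*} [Group G] (x y : G) : Set G :=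
  {a | ∃ (i : ℕ) (g : G), a = g⁻¹ * x ^ i * g ∨ a = g⁻¹ * y ^ i * g ∨ a = g⁻¹ * (x * y) ^ i * g}

/-- An unmixed Beauville structure on a group. -/
def IsBeauvilleStructure {G : Type*} [Group G] (x₁ y₁ x₂ y₂ : G) : Prop :=
  Subgroup.closure {x₁, y₁} = ⊤ ∧ Subgroup.closure {x₂, y₂} = ⊤ ∧
  BSigma x₁ y₁ ∩ BSigma x₂ y₂ = {1}

/-- A Beauville group: a finite group admitting an unmixed Beauville structure. -/
def IsBeauvilleGroup (G : Type*) [Group G] [Finite G] : Prop :=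
  ∃ x₁ y₁ x₂ y₂ : G, IsBeauvilleStructure x₁ y₁ x₂ y₂

lemma aux_pow_mem {G G' : Type*} [Group G] [Group G'] {x : G} {x' : G'}
    {H : Subgroup (G × G')} (h : (x, x') ∈ H)
    (hc : Nat.Coprime (orderOf x) (orderOf x')) : ((x, 1) : G × G') ∈ H := by
  obtain ⟨k, hk1, hk2⟩ := Nat.chineseRemainder hc 1 0
  have hkey : ((x, x') : G × G') ^ k = (x, 1) := by
    have h1 : x ^ k = x ^ 1 := pow_eq_pow_iff_modEq.mpr hk1
    have h2 : x' ^ k = x' ^ 0 := pow_eq_pow_iff_modEq.mpr hk2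
    simp only [pow_one] at h1
    simp only [pow_zero] at h2
    exact Prod.ext (by simpa using h1) (by simpa using h2)
  have := pow_mem h k
  rwa [hkey] at this

lemma aux_gen {G G' : Type*} [Group G] [Group G'] (x y : G) (x' y' : G')
    (hg : Subgroup.closure {x, y} = ⊤) (hg' : Subgroup.closure {x', y'} = ⊤)
    (hcx : Nat.Coprime (orderOf x) (orderOf x'))
    (hcy : Nat.Coprime (orderOf y) (orderOf y')) :
    Subgroup.closure ({(x, x'), (y, y')} : Set (G × G')) = ⊤ := by
  set H := Subgroup.closure ({(x, x'), (y, y')} : Set (G × G')) with hH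
  have hxx : ((x, x') : G × G') ∈ H := Subgroup.subset_closure (by simp)
  have hyy : ((y, y') : G × G') ∈ H := Subgroup.subset_closure (by simp)
  have hx1 : ((x, 1) : G × G') ∈ H := aux_pow_mem hxx hcx
  have hy1 : ((y, 1) : G × G') ∈ H := aux_pow_mem hyy hcy
  have hx2 : ((1, x') : G × G') ∈ H := by
    have := (mul_mem hxx (inv_mem hx1))
    simpa using this
  have hy2 : ((1, y') : G × G') ∈ H := by
    have := (mul_mem hyy (inv_mem hy1))
    simpa using this
  have hleft : ∀ a : G, ((a, 1) : G × G') ∈ H := by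
    intro a
    have ha : a ∈ Subgroup.closure {x, y} := hg ▸ Subgroup.mem_top a
    have : (MonoidHom.inl G G') a ∈ Subgroup.map (MonoidHom.inl G G') (Subgroup.closure {x, y}) :=
      Subgroup.mem_map_of_mem _ ha
    rw [MonoidHom.map_closure] at this
    refine Subgroup.closure_le H |>.mpr ?_ this
    rintro z ⟨w, hw, rfl⟩
    rcases hw with rfl | rfl
    · exact hx1
    · exact hy1
  have hright : ∀ b : G', ((1, b) : G × G') ∈ H := by
    intro b
    have hb : b ∈ Subgroup.closure {x', y'} := hg' ▸ Subgroup.mem_top b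
    have : (MonoidHom.inr G G') b ∈ Subgroup.map (MonoidHom.inr G G') (Subgroup.closure {x', y'}) :=
      Subgroup.mem_map_of_mem _ hb
    rw [MonoidHom.map_closure] at this
    refine Subgroup.closure_le H |>.mpr ?_ this
    rintro z ⟨w, hw, rfl⟩
    rcases hw with rfl | rfl
    · exact hx2
    · exact hy2
  rw [eq_top_iff]
  rintro ⟨a, b⟩ -
  have : ((a, b) : G × G') = (a, 1) * (1, b) := by simp
  rw [this]
  exact mul_mem (hleft a) (hright b)

lemma aux_proj1 {G G' : Type*} [Group G] [Group G'] {p q : G × G'} {a : G × G'}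
    (h : a ∈ BSigma p q) : a.1 ∈ BSigma p.1 q.1 := by
  obtain ⟨i, g, h | h | h⟩ := h
  · exact ⟨i, g.1, Or.inl (by rw [h]; simp)⟩
  · exact ⟨i, g.1, Or.inr (Or.inl (by rw [h]; simp))⟩
  · exact ⟨i, g.1, Or.inr (Or.inr (by rw [h]; simp [Prod.pow_fst]))⟩

lemma aux_proj2 {G G' : Type*} [Group G] [Group G'] {p q : G × G'} {a : G × G'}
    (h : a ∈ BSigma p q) : a.2 ∈ BSigma p.2 q.2 := by
  obtain ⟨i, g, h | h | h⟩ := h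
  · exact ⟨i, g.2, Or.inl (by rw [h]; simp)⟩
  · exact ⟨i, g.2, Or.inr (Or.inl (by rw [h]; simp))⟩
  · exact ⟨i, g.2, Or.inr (Or.inr (by rw [h]; simp [Prod.pow_snd]))⟩

lemma one_mem_BSigma {G : Type*} [Group G] (x y : G) : (1 : G) ∈ BSigma x y :=
  ⟨0, 1, Or.inl (by simp)⟩

theorem stmt_3 {G G' : Type*} [Group G] [Finite G] [Group G'] [Finite G']
    (x₁ y₁ x₂ y₂ : G) (x₁' y₁' x₂' y₂' : G')
    (hB : IsBeauvilleStructure x₁ y₁ x₂ y₂)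
    (hB' : IsBeauvilleStructure x₁' y₁' x₂' y₂')
    (h1x : Nat.gcd (orderOf x₁) (orderOf x₁') = 1)
    (h1y : Nat.gcd (orderOf y₁) (orderOf y₁') = 1)
    (h2x : Nat.gcd (orderOf x₂) (orderOf x₂') = 1)
    (h2y : Nat.gcd (orderOf y₂) (orderOf y₂') = 1) :
    IsBeauvilleStructure (G := G × G') (x₁, x₁') (y₁, y₁') (x₂, x₂') (y₂, y₂') := by
  obtain ⟨hg1, hg2, hs⟩ := hB
  obtain ⟨hg1', hg2', hs'⟩ := hB'
  refine ⟨aux_gen _ _ _ _ hg1 hg1' h1x h1y, aux_gen _ _ _ _ hg2 hg2' h2x h2y, ?_⟩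
  ext a
  simp only [Set.mem_inter_iff, Set.mem_singleton_iff]
  constructor
  · rintro ⟨h1, h2⟩
    have e1 : a.1 = 1 := by
      have : a.1 ∈ BSigma x₁ y₁ ∩ BSigma x₂ y₂ := ⟨aux_proj1 h1, aux_proj1 h2⟩
      rw [hs] at this; exact this
    have e2 : a.2 = 1 := by
      have : a.2 ∈ BSigma x₁' y₁' ∩ BSigma x₂' y₂' := ⟨aux_proj2 h1, aux_proj2 h2⟩
      rw [hs'] at this; exact this
    exact Prod.ext e1 e2
  · rintro rfl
    exact ⟨one_mem_BSigma _ _, one_mem_BSigma _ _⟩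
end

section
/- For any positive integers a ≥ 2 and n ≥ 2 with (a,n) ≠ (2,6) and such that it is not the case that n = 2 and a+1 is a power of 2, there exists a prime p dividing a^n − 1 that does not divide a^k − 1 for any 1 ≤ k < n. -/
/-!
A prime `p` is a primitive prime divisor of `a ^ n - 1` exactly when `a` has order `n` modulo `p`.
If there is none, every prime factor `p` of `Φₙ(a)` divides `n`, and `a` has order `n / p ^ vₚ(n)`
modulo `p`; as this order divides `p - 1`, `p` is the largest prime factor of `n`. So `Φₙ(a)` is a
power of a single prime `P`.

If `P = 2`, then `n = 2 ^ β` and `Φₙ(a) = a ^ (n / 2) + 1`, which is `a + 1` for `n = 2` and a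
square plus one, hence not divisible by `4`, for `n ≥ 4`. If `P` is odd, lifting the exponent
shows `P² ∤ Φₙ(a)`, so `Φₙ(a) = P`. But with `n = P ^ β * m`, `P ∤ m` and `Q = a ^ P ^ (β - 1)` we
have `Φₙ(a) = Φ_{Pm}(Q)` and `Φₘ(Q ^ P) = Φ_{Pm}(Q) Φₘ(Q)`, and the bounds
`(x - 1) ^ φ(m) ≤ Φₘ(x) ≤ (x + 1) ^ φ(m)` give `Φ_{Pm}(Q) > P` unless `Q = 2` and `P = 3`, which
leaves only `(a, n) = (2, 6)`.
-/

open Polynomial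

theorem ZMod.natCast_pow_eq_one_iff_dvd {p a k : ℕ} (ha : a ≠ 0) :
    (a : ZMod p) ^ k = 1 ↔ p ∣ a ^ k - 1 := by
  rw [← ZMod.natCast_eq_zero_iff, Nat.cast_sub (Nat.one_le_pow _ _ (Nat.pos_of_ne_zero ha)),
    sub_eq_zero]
  push_cast
  rfl

theorem Nat.le_of_ordCompl_dvd_sub_one {n p q : ℕ} (hn : n ≠ 0) (hp : p.Prime) (hq : q.Prime)
    (hqn : q ∣ n) (h : ordCompl[p] n ∣ p - 1) : q ≤ p := by
  rw [← Nat.ordProj_mul_ordCompl_eq_self n p] at hqn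
  rcases hq.dvd_mul.mp hqn with hqp | hqm
  · exact ((Nat.prime_dvd_prime_iff_eq hq hp).mp (hq.dvd_of_dvd_pow hqp)).le
  · have := Nat.le_of_dvd (Nat.ordCompl_pos p hn) hqm
    have := Nat.le_of_dvd (Nat.sub_pos_of_lt hp.one_lt) h
    omega

theorem Nat.sq_add_one_ne_two_pow {b : ℕ} (hb : 2 ≤ b) (k : ℕ) : b ^ 2 + 1 ≠ 2 ^ k := by
  intro h
  have hk : 2 ≤ k := by
    by_contra! hk
    interval_cases k <;> nlinarith
  have h4 : 4 ∣ b ^ 2 + 1 := h ▸ pow_dvd_pow 2 hk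
  have := Nat.pow_mod b 2 4
  have : b % 4 < 4 := Nat.mod_lt _ (by norm_num)
  interval_cases b % 4 <;> omega

theorem Nat.mul_add_one_add_one_lt_pow {p q : ℕ} (hq : 2 ≤ q) (hp : 3 ≤ p)
    (h : ¬(q = 2 ∧ p = 3)) : p * (q + 1) + 1 < q ^ p := by
  rcases hp.eq_or_lt with rfl | hp4
  · have hq3 : 3 ≤ q := by omega
    have : q ^ 3 = q * q * q := by ring
    nlinarith [Nat.mul_le_mul hq3 hq3]
  clear h
  induction p, hp4 using Nat.le_induction with
  | base =>
    have : q ^ 4 = q * q * q * q := by ring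
    nlinarith [Nat.mul_le_mul hq hq, Nat.mul_le_mul (Nat.mul_le_mul hq hq) hq]
  | succ p hp ih =>
    rw [pow_succ]
    nlinarith [Nat.mul_le_mul_left (q ^ p) hq, ih (by omega)]

theorem orderOf_eq_ordCompl_of_dvd_cyclotomic_eval {p n : ℕ} [Fact p.Prime] {a : ℤ}
    (hn : n ≠ 0) (h : (p : ℤ) ∣ (cyclotomic n ℤ).eval a) :
    orderOf (a : ZMod p) = ordCompl[p] n := by
  have hroot : (cyclotomic (p ^ n.factorization p * ordCompl[p] n) (ZMod p)).IsRoot a := by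
    rw [Nat.ordProj_mul_ordCompl_eq_self, IsRoot.def, ← map_cyclotomic_int, eval_intCast_map,
      eq_intCast, ZMod.intCast_zmod_eq_zero_iff_dvd]
    exact h
  have : NeZero ((ordCompl[p] n : ℕ) : ZMod p) :=
    ⟨by rw [Ne, ZMod.natCast_eq_zero_iff]; exact Nat.not_dvd_ordCompl Fact.out hn⟩
  exact (isRoot_cyclotomic_prime_pow_mul_iff_of_charP.mp hroot).eq_orderOf.symm

theorem ordCompl_dvd_sub_one_of_dvd_cyclotomic_eval {p n : ℕ} [Fact p.Prime] {a : ℤ}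
    (hn : n ≠ 0) (h : (p : ℤ) ∣ (cyclotomic n ℤ).eval a) : ordCompl[p] n ∣ p - 1 := by
  have hord := orderOf_eq_ordCompl_of_dvd_cyclotomic_eval hn h
  rw [← hord]
  refine ZMod.orderOf_dvd_card_sub_one fun ha0 => (Nat.ordCompl_pos p hn).ne' ?_
  rw [← hord, ha0, orderOf_zero]

theorem Polynomial.cyclotomic_prime_pow_mul_eq_expand {p n : ℕ} (hp : p.Prime) (hn : p ∣ n)
    (R : Type*) [CommRing R] (k : ℕ) :
    cyclotomic (p ^ k * n) R = expand R (p ^ k) (cyclotomic n R) := by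
  induction k with
  | zero => simp
  | succ k ih =>
    rw [pow_succ', expand_mul, ← ih, cyclotomic_expand_eq_cyclotomic hp (hn.mul_left _)]
    ring_nf

theorem Polynomial.natAbs_cyclotomic_two_pow_succ_eval (a k : ℕ) :
    ((cyclotomic (2 ^ (k + 1)) ℤ).eval (a : ℤ)).natAbs = a ^ 2 ^ k + 1 := by
  rw [cyclotomic_prime_pow_eq_geom_sum Nat.prime_two]
  simp only [Finset.sum_range_succ, Finset.range_one, Finset.sum_singleton, pow_zero, pow_one,
    eval_add, eval_one, eval_pow, eval_X]
  norm_cast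
  omega

theorem Polynomial.natAbs_cyclotomic_two_pow_eval_ne_two_pow {a β : ℕ} (ha : 2 ≤ a)
    (hβ : 2 ≤ β) (k : ℕ) : ((cyclotomic (2 ^ β) ℤ).eval (a : ℤ)).natAbs ≠ 2 ^ k := by
  obtain ⟨β, rfl⟩ := Nat.exists_eq_add_of_le' hβ
  rw [natAbs_cyclotomic_two_pow_succ_eval, pow_succ, pow_mul]
  exact Nat.sq_add_one_ne_two_pow (ha.trans (Nat.le_self_pow (by positivity) a)) k

theorem Polynomial.prime_lt_cyclotomic_prime_mul_eval {p m : ℕ} (hp : p.Prime) (hm : ¬p ∣ m)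
    {q : ℝ} (hq : 1 < q) (hpq : p * (q + 1) < q ^ p - 1) :
    (p : ℝ) < (cyclotomic (p * m) ℝ).eval q := by
  have hφ : m.totient ≠ 0 :=
    (Nat.totient_pos.mpr (Nat.pos_of_ne_zero (by rintro rfl; simp at hm))).ne'
  have hprod : (cyclotomic m ℝ).eval (q ^ p) =
      (cyclotomic (p * m) ℝ).eval q * (cyclotomic m ℝ).eval q := by
    rw [← expand_eval, cyclotomic_expand_eq_cyclotomic_mul hp hm, eval_mul, mul_comm m]
  have hp1 : (1 : ℝ) ≤ p := by exact_mod_cast hp.one_lt.le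
  have : p * (cyclotomic m ℝ).eval q < (cyclotomic (p * m) ℝ).eval q * (cyclotomic m ℝ).eval q :=
    calc p * (cyclotomic m ℝ).eval q ≤ p * (q + 1) ^ m.totient :=
          mul_le_mul_of_nonneg_left (cyclotomic_eval_le_add_one_pow_totient hq m) (by positivity)
      _ ≤ (p * (q + 1)) ^ m.totient := by
          rw [mul_pow]
          exact mul_le_mul_of_nonneg_right (le_self_pow₀ hp1 hφ) (by positivity)
      _ < (q ^ p - 1) ^ m.totient := pow_lt_pow_left₀ hpq (by positivity) hφ
      _ ≤ (cyclotomic m ℝ).eval (q ^ p) :=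
          sub_one_pow_totient_le_cyclotomic_eval (one_lt_pow₀ hq hp.ne_zero) m
      _ = _ := hprod
  exact lt_of_mul_lt_mul_right this (cyclotomic_pos' m hq).le

theorem Nat.Prime.lt_natAbs_cyclotomic_eval {p n a : ℕ} (hp : p.Prime) (hp3 : 3 ≤ p)
    (hpn : p ∣ n) (hn : n ≠ 0) (ha : 2 ≤ a) (hexc : ¬(a = 2 ∧ p = 3 ∧ n.factorization p = 1)) :
    p < ((cyclotomic n ℤ).eval (a : ℤ)).natAbs := by
  set β := n.factorization p
  set m := ordCompl[p] n
  have hβ : 1 ≤ β := hp.factorization_pos_of_dvd hn hpn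
  have hnm : n = p ^ (β - 1) * (p * m) := by
    rw [← mul_assoc, ← pow_succ, Nat.sub_add_cancel hβ, Nat.ordProj_mul_ordCompl_eq_self]
  have hq : a ≤ a ^ p ^ (β - 1) := Nat.le_self_pow (by positivity) a
  have hqp : ¬(a ^ p ^ (β - 1) = 2 ∧ p = 3) := by
    rintro ⟨hq2, rfl⟩
    obtain rfl : a = 2 := by omega
    have : 3 ^ (β - 1) = 1 := Nat.pow_right_injective le_rfl (hq2.trans (pow_one 2).symm)
    exact hexc ⟨rfl, rfl, by have := Nat.pow_eq_one.mp this; omega⟩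
  have hineq : ((p * (a ^ p ^ (β - 1) + 1) + 1 : ℕ) : ℝ) < ((a ^ p ^ (β - 1)) ^ p : ℕ) := by
    exact_mod_cast Nat.mul_add_one_add_one_lt_pow (by omega) hp3 hqp
  push_cast at hineq
  have hcast : (((cyclotomic n ℤ).eval (a : ℤ) : ℤ) : ℝ) = (cyclotomic n ℝ).eval (a : ℝ) := by
    simpa using (cyclotomic.eval_apply (a : ℤ) n (Int.castRingHom ℝ)).symm
  rw [← @Nat.cast_lt ℝ, Nat.cast_natAbs, abs_of_pos (cyclotomic_pos' n (by exact_mod_cast ha)),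
    hcast, hnm, cyclotomic_prime_pow_mul_eq_expand hp (dvd_mul_right p m), expand_eval]
  exact prime_lt_cyclotomic_prime_mul_eval hp (Nat.not_dvd_ordCompl hp hn)
    (by exact_mod_cast (by omega : 1 < a ^ p ^ (β - 1))) (by linarith)

theorem Polynomial.pow_sub_one_mul_natAbs_cyclotomic_eval_dvd {a d n : ℕ} (ha : a ≠ 0)
    (hd : d ∈ n.properDivisors) :
    (a ^ d - 1) * ((cyclotomic n ℤ).eval (a : ℤ)).natAbs ∣ a ^ n - 1 := by
  have hdvd := eval_dvd (x := (a : ℤ))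
    (X_pow_sub_one_mul_cyclotomic_dvd_X_pow_sub_one_of_dvd ℤ hd)
  rw [← Int.natCast_dvd_natCast]
  push_cast [Nat.cast_sub (Nat.one_le_pow _ _ (Nat.pos_of_ne_zero ha)), Int.natCast_natAbs]
  simp only [eval_mul, eval_sub, eval_pow, eval_X, eval_one] at hdvd
  exact (mul_dvd_mul_left _ (abs_dvd_self _)).trans hdvd

theorem Polynomial.not_sq_dvd_natAbs_cyclotomic_prime_mul_eval {p s a : ℕ} [Fact p.Prime]
    (hp_odd : Odd p) (ha : 1 < a) (hs : s ≠ 0) (hps : p ∣ a ^ s - 1) :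
    ¬p ^ 2 ∣ ((cyclotomic (p * s) ℤ).eval (a : ℤ)).natAbs := by
  intro hsq
  have hp : p.Prime := Fact.out
  have has : 1 < a ^ s := Nat.one_lt_pow hs ha
  have hpas : ¬p ∣ a ^ s := fun h => hp.one_lt.ne' <| Nat.dvd_one.mp <| by
    simpa [Nat.sub_sub_self has.le] using Nat.dvd_sub h hps
  have hlte : padicValNat p (a ^ (p * s) - 1) = padicValNat p (a ^ s - 1) + 1 := by
    have := padicValNat.pow_sub_pow hp_odd has hps hpas hp.ne_zero (y := 1)
    rwa [one_pow, ← pow_mul, mul_comm, padicValNat_self] at this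
  have hs_mem : s ∈ (p * s).properDivisors :=
    Nat.mem_properDivisors.mpr ⟨dvd_mul_left s p, by nlinarith [hp.one_lt, Nat.pos_of_ne_zero hs]⟩
  have hbig : p ^ (padicValNat p (a ^ s - 1) + 2) ∣ a ^ (p * s) - 1 := by
    rw [pow_add]
    exact (mul_dvd_mul pow_padicValNat_dvd hsq).trans
      (pow_sub_one_mul_natAbs_cyclotomic_eval_dvd (by omega) hs_mem)
  have hne : a ^ (p * s) - 1 ≠ 0 := by
    have := Nat.one_lt_pow (Nat.mul_ne_zero hp.ne_zero hs) ha
    omega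
  have := (padicValNat_dvd_iff_le hne).mp hbig
  omega

theorem Nat.Prime.natAbs_cyclotomic_eval_ne_pow {p n a : ℕ} (hp : p.Prime) (hodd : Odd p)
    (hpn : p ∣ n) (hn : n ≠ 0) (ha : 2 ≤ a) (hord : orderOf (a : ZMod p) = ordCompl[p] n)
    (hexc : ¬(a = 2 ∧ p = 3 ∧ n.factorization p = 1)) (k : ℕ) :
    ((cyclotomic n ℤ).eval (a : ℤ)).natAbs ≠ p ^ k := by
  have := Fact.mk hp
  intro hΦ
  obtain ⟨s, rfl⟩ := hpn
  have hs : s ≠ 0 := right_ne_zero_of_mul hn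
  have hps : p ∣ a ^ s - 1 := by
    rw [← ZMod.natCast_pow_eq_one_iff_dvd (by omega), ← orderOf_dvd_iff_pow_eq_one, hord]
    refine (Nat.Coprime.dvd_mul_left ?_).mp (Nat.ordCompl_dvd (p * s) p)
    exact Nat.coprime_comm.mp ((hp.coprime_iff_not_dvd).mpr (Nat.not_dvd_ordCompl hp hn))
  have hk : k ≤ 1 := by
    by_contra! hk
    exact not_sq_dvd_natAbs_cyclotomic_prime_mul_eval hodd (by omega) hs hps
      (hΦ ▸ pow_dvd_pow p hk)
  have hp3 : 3 ≤ p := by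
    have := Nat.odd_iff.mp hodd
    have := hp.two_le
    omega
  have hlt := hp.lt_natAbs_cyclotomic_eval hp3 (dvd_mul_right p s) hn ha hexc
  rw [hΦ] at hlt
  exact absurd (hlt.trans_le (Nat.pow_le_pow_right hp.pos hk)) (by simp)

theorem exists_prime_pow_eq_natAbs_cyclotomic_eval {a n : ℕ} (ha : 2 ≤ a) (hn : 2 ≤ n)
    (hno : ∀ p : ℕ, p.Prime → orderOf (a : ZMod p) ≠ n) :
    ∃ p k : ℕ, p.Prime ∧ p ∣ n ∧ orderOf (a : ZMod p) = ordCompl[p] n ∧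
      ordCompl[p] n ∣ p - 1 ∧ ((cyclotomic n ℤ).eval (a : ℤ)).natAbs = p ^ k := by
  have hn0 : n ≠ 0 := by omega
  set Φ := ((cyclotomic n ℤ).eval (a : ℤ)).natAbs
  have hΦ : 1 < Φ := (sub_one_lt_natAbs_cyclotomic_eval hn (by omega)).trans_le' (by omega)
  have hfactor : ∀ p, p.Prime → p ∣ Φ →
      p ∣ n ∧ orderOf (a : ZMod p) = ordCompl[p] n ∧ ordCompl[p] n ∣ p - 1 := by
    intro p hp hpΦ
    have := Fact.mk hp
    have hpΦ' : (p : ℤ) ∣ (cyclotomic n ℤ).eval (a : ℤ) := Int.ofNat_dvd_left.mpr hpΦ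
    have hord := orderOf_eq_ordCompl_of_dvd_cyclotomic_eval hn0 hpΦ'
    rw [Int.cast_natCast] at hord
    refine ⟨by_contra fun hpn => hno p hp ?_, hord,
      ordCompl_dvd_sub_one_of_dvd_cyclotomic_eval hn0 hpΦ'⟩
    rw [hord, Nat.factorization_eq_zero_of_not_dvd hpn, pow_zero, Nat.div_one]
  have hp := Nat.minFac_prime hΦ.ne'
  obtain ⟨hpn, hord, hpm⟩ := hfactor _ hp (Nat.minFac_dvd Φ)
  refine ⟨_, _, hp, hpn, hord, hpm, Nat.eq_prime_pow_of_unique_prime_dvd (by omega) ?_⟩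
  intro q hq hqΦ
  obtain ⟨hqn, -, hqm⟩ := hfactor q hq hqΦ
  exact le_antisymm (Nat.le_of_ordCompl_dvd_sub_one hn0 hp hq hqn hpm)
    (Nat.le_of_ordCompl_dvd_sub_one hn0 hq hp hpn hqm)

theorem exists_prime_orderOf_natCast_eq {a n : ℕ} (ha : 2 ≤ a) (hn : 2 ≤ n)
    (h6 : ¬(a = 2 ∧ n = 6)) (h2 : ¬(n = 2 ∧ ∃ k : ℕ, a + 1 = 2 ^ k)) :
    ∃ p : ℕ, p.Prime ∧ orderOf (a : ZMod p) = n := by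
  by_contra! hno
  obtain ⟨p, k, hp, hpn, hord, hpm, hΦ⟩ := exists_prime_pow_eq_natAbs_cyclotomic_eval ha hn hno
  rcases hp.eq_two_or_odd' with rfl | hodd
  · obtain ⟨β, rfl⟩ : ∃ β, n = 2 ^ β := by
      have hn2 := Nat.ordProj_mul_ordCompl_eq_self n 2
      rw [Nat.dvd_one.mp hpm, mul_one] at hn2
      exact ⟨_, hn2.symm⟩
    rcases β with _ | _ | β
    · omega
    · rw [natAbs_cyclotomic_two_pow_succ_eval] at hΦ
      exact h2 ⟨rfl, k, by simpa using hΦ⟩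
    · exact natAbs_cyclotomic_two_pow_eval_ne_two_pow ha (by omega) k hΦ
  · refine hp.natAbs_cyclotomic_eval_ne_pow hodd hpn (by omega) ha hord ?_ k hΦ
    rintro ⟨rfl, rfl, h3⟩
    have h2ord : orderOf ((2 : ℕ) : ZMod 3) = 2 := orderOf_eq_prime (by decide) (by decide)
    rw [h3] at hord
    exact h6 ⟨rfl, by rw [← Nat.ordProj_mul_ordCompl_eq_self n 3, h3, ← hord, h2ord]; rfl⟩

theorem stmt_6 (a n : ℕ) (ha : 2 ≤ a) (hn : 2 ≤ n)
    (h1 : ¬(a = 2 ∧ n = 6)) (h2 : ¬(n = 2 ∧ ∃ k : ℕ, a + 1 = 2 ^ k)) :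
    ∃ p : ℕ, p.Prime ∧ p ∣ a ^ n - 1 ∧ ∀ k : ℕ, 1 ≤ k → k < n → ¬ p ∣ a ^ k - 1 := by
  obtain ⟨p, hp, hord⟩ := exists_prime_orderOf_natCast_eq ha hn h1 h2
  refine ⟨p, hp, ?_, fun k hk hkn hdvd => ?_⟩
  · rw [← ZMod.natCast_pow_eq_one_iff_dvd (by omega), ← hord]
    exact pow_orderOf_eq_one _
  · rw [← ZMod.natCast_pow_eq_one_iff_dvd (by omega)] at hdvd
    exact absurd (orderOf_le_of_pow_eq_one hk hdvd) (by omega)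
end

section
/- Let H be a finite group and x₁, y₁, x₂, y₂ ∈ H with: (1) o(x₁) and o(y₁) even; (2) ⟨x₁², y₁², x₁y₁⟩ = H; (3) ⟨x₂, y₂⟩ = H; (4) o(x₁)o(y₁)o(x₁y₁) coprime to o(x₂)o(y₂)o(x₂y₂). Then in the group G⁰ = H × H × ℤ/2ℤ, the elements x = (x₁, x₂, 1) and y = (y₁, y₂, 1) generate G⁰. -/
private lemma exists_pow_pow_eq {G : Type*} [Group G] [Finite G] (g : G) (n : ℕ)
    (h : Nat.Coprime n (orderOf g)) : ∃ k : ℕ, (g ^ n) ^ k = g := by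
  have hpos : 0 < orderOf g := orderOf_pos g
  haveI : NeZero (orderOf g) := ⟨hpos.ne'⟩
  let u := ZMod.unitOfCoprime n h
  refine ⟨(((u⁻¹ : (ZMod (orderOf g))ˣ) : ZMod (orderOf g))).val, ?_⟩
  rw [← pow_mul]
  have hmod : n * ((u⁻¹ : (ZMod (orderOf g))ˣ) : ZMod (orderOf g)).val ≡ 1
      [MOD orderOf g] := by
    rw [← ZMod.natCast_eq_natCast_iff]
    push_cast
    rw [ZMod.natCast_val, ZMod.cast_id]
    have : (n : ZMod (orderOf g)) = (u : ZMod (orderOf g)) := rfl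
    rw [this, u.mul_inv]
  calc g ^ (n * ((u⁻¹ : (ZMod (orderOf g))ˣ) : ZMod (orderOf g)).val)
      = g ^ 1 := pow_eq_pow_iff_modEq.mpr hmod
    _ = g := pow_one g

theorem stmt_14 {H : Type*} [Group H] [Finite H] (x₁ y₁ x₂ y₂ : H)
    (h1 : Even (orderOf x₁) ∧ Even (orderOf y₁))
    (h2 : Subgroup.closure {x₁ ^ 2, y₁ ^ 2, x₁ * y₁} = ⊤)
    (h3 : Subgroup.closure {x₂, y₂} = ⊤)
    (h4 : Nat.Coprime (orderOf x₁ * orderOf y₁ * orderOf (x₁ * y₁))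
      (orderOf x₂ * orderOf y₂ * orderOf (x₂ * y₂))) :
    Subgroup.closure
      ({(x₁, x₂, Multiplicative.ofAdd (1 : ZMod 2)),
        (y₁, y₂, Multiplicative.ofAdd (1 : ZMod 2))} :
        Set (H × H × Multiplicative (ZMod 2))) = ⊤ := by
  set C := Multiplicative (ZMod 2)
  set t : C := Multiplicative.ofAdd (1 : ZMod 2) with ht
  set x : H × H × C := (x₁, x₂, t) with hxdef
  set y : H × H × C := (y₁, y₂, t) with hydef
  set K := Subgroup.closure ({x, y} : Set (H × H × C)) with hK
  have hx : x ∈ K := Subgroup.subset_closure (Set.mem_insert _ _)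
  have hy : y ∈ K := Subgroup.subset_closure (Set.mem_insert_of_mem _ rfl)
  have ht_even : ∀ n : ℕ, Even n → t ^ n = 1 := by
    intro n hn
    obtain ⟨k, rfl⟩ := hn
    have : t ^ 2 = 1 := by decide
    rw [← two_mul, pow_mul, this, one_pow]
  -- the two embeddings
  let f1 : H →* H × H × C := MonoidHom.inl H (H × C)
  let f2 : H →* H × H × C :=
    (MonoidHom.inr H (H × C)).comp (MonoidHom.inl H C)
  have hf2 : ∀ g : H, f2 g = (1, g, 1) := fun g => rfl
  have hf1 : ∀ g : H, f1 g = (g, 1, 1) := fun g => rfl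
  -- second coordinate elements
  have key2 : ∀ (g : H × H × C) (g₂ : H), g ∈ K → g.1 = 1 → g.2.2 = 1 →
      Nat.Coprime (orderOf g₂) (orderOf g.2.1) → (∃ k : ℕ, g.2.1 ^ k = g₂) →
      f2 g₂ ∈ K := by
    intro g g₂ hg h1' h2' _ hk
    obtain ⟨k, hk⟩ := hk
    have : f2 g₂ = g ^ k := by
      rw [hf2]
      ext
      · simp [h1']
      · simp [hk]
      · simp [h2']
    rw [this]
    exact pow_mem hg k
  have hx2 : f2 x₂ ∈ K := by
    have hcop : Nat.Coprime (orderOf x₁) (orderOf x₂) :=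
      Nat.Coprime.coprime_dvd_right (Dvd.dvd.mul_right (dvd_mul_right _ _) _)
        (Nat.Coprime.coprime_dvd_left
          (Dvd.dvd.mul_right (dvd_mul_right _ _) _) h4)
    obtain ⟨k, hk⟩ := exists_pow_pow_eq x₂ (orderOf x₁) hcop
    have hmem : x ^ (orderOf x₁) ∈ K := pow_mem hx _
    have heq : x ^ (orderOf x₁) = (1, x₂ ^ (orderOf x₁), 1) := by
      ext
      · simp [hxdef, pow_orderOf_eq_one]
      · simp [hxdef]
      · simp [hxdef, ht_even _ h1.1]
    rw [heq] at hmem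
    have : f2 x₂ = ((1 : H), x₂ ^ (orderOf x₁), (1 : C)) ^ k := by
      rw [hf2]; ext <;> simp [hk]
    rw [this]
    exact pow_mem hmem k
  have hy2 : f2 y₂ ∈ K := by
    have hcop : Nat.Coprime (orderOf y₁) (orderOf y₂) :=
      Nat.Coprime.coprime_dvd_right
        (Dvd.dvd.mul_right (dvd_mul_left _ _) _)
        (Nat.Coprime.coprime_dvd_left
          (Dvd.dvd.mul_right (dvd_mul_left _ _) _) h4)
    obtain ⟨k, hk⟩ := exists_pow_pow_eq y₂ (orderOf y₁) hcop
    have hmem : y ^ (orderOf y₁) ∈ K := pow_mem hy _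
    have heq : y ^ (orderOf y₁) = (1, y₂ ^ (orderOf y₁), 1) := by
      ext
      · simp [hydef, pow_orderOf_eq_one]
      · simp [hydef]
      · simp [hydef, ht_even _ h1.2]
    rw [heq] at hmem
    have : f2 y₂ = ((1 : H), y₂ ^ (orderOf y₁), (1 : C)) ^ k := by
      rw [hf2]; ext <;> simp [hk]
    rw [this]
    exact pow_mem hmem k
  have hall2 : ∀ g : H, f2 g ∈ K := by
    intro g
    have : Subgroup.closure ({x₂, y₂} : Set H) ≤ K.comap f2 := by
      rw [Subgroup.closure_le]
      rintro z (rfl | rfl)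
      exacts [hx2, hy2]
    have := this (by rw [h3]; trivial : g ∈ Subgroup.closure ({x₂, y₂} : Set H))
    simpa [Subgroup.mem_comap] using this
  -- first coordinate
  have hsq : t * t = 1 := by decide
  have hx1sq : f1 (x₁ ^ 2) ∈ K := by
    have : f1 (x₁ ^ 2) = x ^ 2 * (f2 (x₂ ^ 2))⁻¹ := by
      ext <;> simp [hxdef, hf1, hf2, pow_two, hsq] <;> group
    rw [this]
    exact mul_mem (pow_mem hx 2) (inv_mem (hall2 _))
  have hy1sq : f1 (y₁ ^ 2) ∈ K := by
    have : f1 (y₁ ^ 2) = y ^ 2 * (f2 (y₂ ^ 2))⁻¹ := by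
      ext <;> simp [hydef, hf1, hf2, pow_two, hsq] <;> group
    rw [this]
    exact mul_mem (pow_mem hy 2) (inv_mem (hall2 _))
  have hxy1 : f1 (x₁ * y₁) ∈ K := by
    have : f1 (x₁ * y₁) = x * y * (f2 (x₂ * y₂))⁻¹ := by
      ext <;> simp [hxdef, hydef, hf1, hf2, hsq] <;> group
    rw [this]
    exact mul_mem (mul_mem hx hy) (inv_mem (hall2 _))
  have hall1 : ∀ g : H, f1 g ∈ K := by
    intro g
    have : Subgroup.closure ({x₁ ^ 2, y₁ ^ 2, x₁ * y₁} : Set H) ≤ K.comap f1 := by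
      rw [Subgroup.closure_le]
      rintro z (rfl | rfl | rfl)
      exacts [hx1sq, hy1sq, hxy1]
    have := this (by rw [h2]; trivial :
      g ∈ Subgroup.closure ({x₁ ^ 2, y₁ ^ 2, x₁ * y₁} : Set H))
    simpa [Subgroup.mem_comap] using this
  -- the twist element
  have htK : ((1 : H), (1 : H), t) ∈ K := by
    have : ((1 : H), (1 : H), t) = (f1 x₁)⁻¹ * (f2 x₂)⁻¹ * x := by
      ext <;> simp [hxdef, hf1, hf2]
    rw [this]
    exact mul_mem (mul_mem (inv_mem (hall1 _)) (inv_mem (hall2 _))) hx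
  have hallC : ∀ c : C, ((1 : H), (1 : H), c) ∈ K := by
    intro c
    have : c = 1 ∨ c = t := by revert c; decide
    rcases this with rfl | rfl
    · exact one_mem K
    · exact htK
  -- conclude
  rw [eq_top_iff]
  rintro ⟨a, b, c⟩ -
  have : ((a, b, c) : H × H × C) = f1 a * f2 b * (1, 1, c) := by
    ext <;> simp [hf1, hf2]
  rw [this]
  exact mul_mem (mul_mem (hall1 a) (hall2 b)) (hallC c)
end

section
/- The alternating group A₅ is not a Beauville group. -/
open Equiv Pointwise

/-- A fixed 5-cycle. -/
def c5 : Perm (Fin 5) := finRotate 5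

lemma c5_mem : c5 ∈ alternatingGroup (Fin 5) := by
  rw [Equiv.Perm.mem_alternatingGroup]; decide

/- If `x`, `y` and `x*y` all avoid order 5, the group they generate preserves a subset of
size 1 or 2 of the five points. Verified by computation, in five slices. -/
set_option maxRecDepth 1000000 in
set_option synthInstance.maxSize 1000 in
set_option synthInstance.maxHeartbeats 1000000 in
set_option maxHeartbeats 40000000 in
lemma D1_0 : ∀ x y : Perm (Fin 5), x 0 = 0 → Perm.sign x = 1 → ¬(x ^ 5 = 1 ∧ x ≠ 1) →
    Perm.sign y = 1 → ¬(y ^ 5 = 1 ∧ y ≠ 1) → ¬((x*y) ^ 5 = 1 ∧ x*y ≠ 1) →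
    ∃ s : Finset (Fin 5), (s.card = 1 ∨ s.card = 2) ∧ s.image x = s ∧ s.image y = s := by
  decide

set_option maxRecDepth 1000000 in
set_option synthInstance.maxSize 1000 in
set_option synthInstance.maxHeartbeats 1000000 in
set_option maxHeartbeats 40000000 in
lemma D1_1 : ∀ x y : Perm (Fin 5), x 0 = 1 → Perm.sign x = 1 → ¬(x ^ 5 = 1 ∧ x ≠ 1) →
    Perm.sign y = 1 → ¬(y ^ 5 = 1 ∧ y ≠ 1) → ¬((x*y) ^ 5 = 1 ∧ x*y ≠ 1) →
    ∃ s : Finset (Fin 5), (s.card = 1 ∨ s.card = 2) ∧ s.image x = s ∧ s.image y = s := by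
  decide

set_option maxRecDepth 1000000 in
set_option synthInstance.maxSize 1000 in
set_option synthInstance.maxHeartbeats 1000000 in
set_option maxHeartbeats 40000000 in
lemma D1_2 : ∀ x y : Perm (Fin 5), x 0 = 2 → Perm.sign x = 1 → ¬(x ^ 5 = 1 ∧ x ≠ 1) →
    Perm.sign y = 1 → ¬(y ^ 5 = 1 ∧ y ≠ 1) → ¬((x*y) ^ 5 = 1 ∧ x*y ≠ 1) →
    ∃ s : Finset (Fin 5), (s.card = 1 ∨ s.card = 2) ∧ s.image x = s ∧ s.image y = s := by
  decide

set_option maxRecDepth 1000000 in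
set_option synthInstance.maxSize 1000 in
set_option synthInstance.maxHeartbeats 1000000 in
set_option maxHeartbeats 40000000 in
lemma D1_3 : ∀ x y : Perm (Fin 5), x 0 = 3 → Perm.sign x = 1 → ¬(x ^ 5 = 1 ∧ x ≠ 1) →
    Perm.sign y = 1 → ¬(y ^ 5 = 1 ∧ y ≠ 1) → ¬((x*y) ^ 5 = 1 ∧ x*y ≠ 1) →
    ∃ s : Finset (Fin 5), (s.card = 1 ∨ s.card = 2) ∧ s.image x = s ∧ s.image y = s := by
  decide

set_option maxRecDepth 1000000 in
set_option synthInstance.maxSize 1000 in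
set_option synthInstance.maxHeartbeats 1000000 in
set_option maxHeartbeats 40000000 in
lemma D1_4 : ∀ x y : Perm (Fin 5), x 0 = 4 → Perm.sign x = 1 → ¬(x ^ 5 = 1 ∧ x ≠ 1) →
    Perm.sign y = 1 → ¬(y ^ 5 = 1 ∧ y ≠ 1) → ¬((x*y) ^ 5 = 1 ∧ x*y ≠ 1) →
    ∃ s : Finset (Fin 5), (s.card = 1 ∨ s.card = 2) ∧ s.image x = s ∧ s.image y = s := by
  decide

lemma D1 : ∀ x y : Perm (Fin 5), Perm.sign x = 1 → Perm.sign y = 1 →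
    ¬(x ^ 5 = 1 ∧ x ≠ 1) → ¬(y ^ 5 = 1 ∧ y ≠ 1) → ¬((x*y) ^ 5 = 1 ∧ x*y ≠ 1) →
    ∃ s : Finset (Fin 5), (s.card = 1 ∨ s.card = 2) ∧ s.image x = s ∧ s.image y = s := by
  intro x y hx hy h1 h2 h3
  have h0 : x 0 = 0 ∨ x 0 = 1 ∨ x 0 = 2 ∨ x 0 = 3 ∨ x 0 = 4 := by
    have : ∀ a : Fin 5, a = 0 ∨ a = 1 ∨ a = 2 ∨ a = 3 ∨ a = 4 := by decide
    exact this (x 0)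
  rcases h0 with h0 | h0 | h0 | h0 | h0
  exacts [D1_0 x y h0 hx h1 hy h2 h3, D1_1 x y h0 hx h1 hy h2 h3, D1_2 x y h0 hx h1 hy h2 h3,
    D1_3 x y h0 hx h1 hy h2 h3, D1_4 x y h0 hx h1 hy h2 h3]

/- Any element of order 5 in A₅ has the fixed 5-cycle as a conjugate (in A₅) of a power. -/
set_option maxRecDepth 100000 in
set_option maxHeartbeats 4000000 in
lemma D2 : ∀ z : Perm (Fin 5), Perm.sign z = 1 → z ^ 5 = 1 → z ≠ 1 →
    ∃ i, i < 5 ∧ ∃ g : Perm (Fin 5), Perm.sign g = 1 ∧ finRotate 5 = g⁻¹ * z ^ i * g := by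
  decide

/-- The fixed 5-cycle preserves no subset of size 1 or 2. -/
lemma D3 : ∀ s : Finset (Fin 5), (s.card = 1 ∨ s.card = 2) → s.image c5 ≠ s := by decide

lemma smul_eq_image (g : Perm (Fin 5)) (s : Finset (Fin 5)) : g • s = s.image g := by
  ext a; simp [Finset.mem_smul_finset, Perm.smul_def, Finset.mem_image]

lemma gen_has5 (x y : Perm (Fin 5)) (hx : Perm.sign x = 1) (hy : Perm.sign y = 1)
    (h : Subgroup.closure {x, y} = alternatingGroup (Fin 5)) :
    (x^5 = 1 ∧ x ≠ 1) ∨ (y^5 = 1 ∧ y ≠ 1) ∨ ((x*y)^5 = 1 ∧ x*y ≠ 1) := by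
  by_contra hc
  push_neg at hc
  obtain ⟨s, hcard, hsx, hsy⟩ := D1 x y hx hy (by tauto) (by tauto) (by tauto)
  have hle : Subgroup.closure {x, y} ≤ MulAction.stabilizer (Perm (Fin 5)) s := by
    rw [Subgroup.closure_le]
    rintro z (rfl | rfl) <;> simp only [SetLike.mem_coe, MulAction.mem_stabilizer_iff] <;>
      rw [smul_eq_image] <;> assumption
  have hc5 : c5 ∈ Subgroup.closure {x, y} := h ▸ c5_mem
  have hst := hle hc5
  rw [MulAction.mem_stabilizer_iff, smul_eq_image] at hst
  exact D3 s hcard hst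

lemma mem_bsigma (x y : alternatingGroup (Fin 5)) (h : Subgroup.closure {x, y} = ⊤) :
    (⟨c5, c5_mem⟩ : alternatingGroup (Fin 5)) ∈ BSigma x y := by
  have hmap : Subgroup.closure {(x : Perm (Fin 5)), (y : Perm (Fin 5))}
      = alternatingGroup (Fin 5) := by
    have := congrArg (Subgroup.map (alternatingGroup (Fin 5)).subtype) h
    rwa [MonoidHom.map_closure, Set.image_insert_eq, Set.image_singleton,
      ← MonoidHom.range_eq_map, Subgroup.range_subtype] at this
  have hx : Perm.sign (x : Perm (Fin 5)) = 1 := Equiv.Perm.mem_alternatingGroup.mp x.2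
  have hy : Perm.sign (y : Perm (Fin 5)) = 1 := Equiv.Perm.mem_alternatingGroup.mp y.2
  rcases gen_has5 x y hx hy hmap with ⟨h1, h2⟩ | ⟨h1, h2⟩ | ⟨h1, h2⟩
  · obtain ⟨i, _, g, hg, heq⟩ := D2 x hx h1 h2
    exact ⟨i, ⟨g, Equiv.Perm.mem_alternatingGroup.mpr hg⟩, Or.inl (by
      apply Subtype.ext; push_cast; exact heq)⟩
  · obtain ⟨i, _, g, hg, heq⟩ := D2 y hy h1 h2
    exact ⟨i, ⟨g, Equiv.Perm.mem_alternatingGroup.mpr hg⟩, Or.inr (Or.inl (by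
      apply Subtype.ext; push_cast; exact heq))⟩
  · obtain ⟨i, _, g, hg, heq⟩ := D2 (x*y) (by rw [map_mul, hx, hy, one_mul]) h1 h2
    exact ⟨i, ⟨g, Equiv.Perm.mem_alternatingGroup.mpr hg⟩, Or.inr (Or.inr (by
      apply Subtype.ext; push_cast; exact heq))⟩

theorem stmt_18 : ¬ IsBeauvilleGroup (alternatingGroup (Fin 5)) := by
  rintro ⟨x₁, y₁, x₂, y₂, h₁, h₂, hint⟩
  have m1 := mem_bsigma x₁ y₁ h₁
  have m2 := mem_bsigma x₂ y₂ h₂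
  have hmem : (⟨c5, c5_mem⟩ : alternatingGroup (Fin 5)) ∈ ({1} : Set _) := hint ▸ ⟨m1, m2⟩
  have : c5 = 1 := congrArg Subtype.val (Set.mem_singleton_iff.mp hmem)
  exact absurd this (by decide)
end
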